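/- Let d ≥ 1, σ > 0, y ∈ ℝ^d, and define f : ℝ^d → ℝ by f(x) = exp(−‖x − y‖²/(2σ²)). Then for every natural number K ≥ 1 and every multi-index k = (k_1, …, k_d) with |k| = K, and every x ∈ ℝ^d, |D^k f(x)| ≤ (K!)^{1/2} / σ^K. -/

import Mathlib

open MeasureTheory Real
open scoped BigOperators ContDiff Nat

/-!
The kernel is a product `∏ᵢ g((xᵢ - yᵢ)/σ)` of one-dimensional Gaussians `g(t) = e^{-t²/2}`, so
`D^k f(x) = ∏ᵢ σ^{-kᵢ} g⁽ᵏⁱ⁾((xᵢ - yᵢ)/σ)`. Differentiating the Fourier representation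
`g(x) = (2π)^{-1/2} ∫ cos(xt) e^{-t²/2} dt` under the integral gives
`|g⁽ⁿ⁾(x)| ≤ (2π)^{-1/2} ∫ |t|ⁿ e^{-t²/2} dt`, and these absolute moments `Mₙ` satisfy
`Mₙ₊₂ = (n + 1) Mₙ`, whence `Mₙ ≤ √(n!) √(2π)`. Finally `∏ᵢ kᵢ! ≤ K!` since multinomial
coefficients are integers.
-/

/-- Partial derivative of `f` in the `i`-th coordinate direction. -/
noncomputable def pderiv' {d : ℕ} (i : Fin d) (f : (Fin d → ℝ) → ℝ) :
    (Fin d → ℝ) → ℝ :=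
  fun x => fderiv ℝ f x (Pi.single i 1)

/-- Mixed partial derivative `D^k = D_1^{k_1} ⋯ D_d^{k_d}` for a multi-index `k`. -/
noncomputable def mixedPartial {d : ℕ} (k : Fin d → ℕ) (f : (Fin d → ℝ) → ℝ) :
    (Fin d → ℝ) → ℝ :=
  (List.finRange d).foldr (fun i g => (pderiv' i)^[k i] g) f

namespace GaussianKernel

noncomputable def gaussian (x : ℝ) : ℝ := exp (-(x ^ 2 / 2))

lemma integrable_abs_pow_mul_exp_neg_sq_half (n : ℕ) :
    Integrable (fun t : ℝ => |t| ^ n * exp (-(t ^ 2 / 2))) := by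
  have h := (integrable_rpow_mul_exp_neg_mul_sq (b := 1 / 2) one_half_pos
    (s := (n : ℝ)) (by linarith [(Nat.cast_nonneg n : (0 : ℝ) ≤ n)])).abs
  refine h.congr (.of_forall fun t => ?_)
  simp only [rpow_natCast, abs_mul, abs_pow, abs_of_pos (exp_pos _)]
  ring_nf

noncomputable def absMoment (n : ℕ) : ℝ := ∫ t : ℝ, |t| ^ n * exp (-(t ^ 2 / 2))

lemma absMoment_eq_rpow_mul_Gamma (n : ℕ) :
    absMoment n = 2 ^ (((n : ℝ) + 1) / 2) * Gamma ((n + 1) / 2) := by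
  have hhalf := integral_rpow_mul_exp_neg_mul_rpow two_pos
    (by linarith [(Nat.cast_nonneg n : (0 : ℝ) ≤ n)] : (-1 : ℝ) < n) one_half_pos
  have habs := integral_comp_abs (f := fun t => t ^ n * exp (-(t ^ 2 / 2)))
  simp only [sq_abs] at habs
  rw [absMoment, habs, setIntegral_congr_fun measurableSet_Ioi
    (g := fun t : ℝ => t ^ (n : ℝ) * exp (-(1 / 2) * t ^ (2 : ℝ)))
    (fun t _ => by simp only [rpow_natCast, rpow_two]; ring_nf), hhalf,
    show -((n : ℝ) + 1) / 2 = -(((n : ℝ) + 1) / 2) by ring, rpow_neg one_half_pos.le,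
    one_div, inv_rpow two_pos.le, inv_inv]
  ring

lemma absMoment_add_two (n : ℕ) : absMoment (n + 2) = (n + 1) * absMoment n := by
  have hpos : ((n : ℝ) + 1) / 2 ≠ 0 := by positivity
  rw [absMoment_eq_rpow_mul_Gamma, absMoment_eq_rpow_mul_Gamma, Nat.cast_add, Nat.cast_ofNat,
    show ((n : ℝ) + 2 + 1) / 2 = ((n : ℝ) + 1) / 2 + 1 by ring, Gamma_add_one hpos,
    rpow_add two_pos, rpow_one]
  ring

lemma add_one_mul_sqrt_factorial_le (m : ℕ) : (m + 1) * √(m ! : ℝ) ≤ √((m + 2)! : ℝ) := by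
  rw [le_sqrt (by positivity) (by positivity), mul_pow, sq_sqrt (by positivity),
    Nat.factorial_succ, Nat.factorial_succ]
  push_cast
  have : (0 : ℝ) ≤ m ! := by positivity
  nlinarith

lemma absMoment_le (n : ℕ) : absMoment n ≤ √(n ! : ℝ) * √(2 * π) := by
  induction n using Nat.strong_induction_on with
  | _ n ih =>
  match n with
  | 0 =>
    rw [absMoment_eq_rpow_mul_Gamma]
    norm_num [Gamma_one_half_eq, ← sqrt_eq_rpow, sqrt_mul]
  | 1 =>
    rw [absMoment_eq_rpow_mul_Gamma]
    norm_num [Gamma_one]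
    rw [← sqrt_mul zero_le_two, le_sqrt' two_pos]
    nlinarith [pi_gt_three]
  | m + 2 =>
    calc absMoment (m + 2) = (m + 1) * absMoment m := absMoment_add_two m
      _ ≤ (m + 1) * (√(m ! : ℝ) * √(2 * π)) := by gcongr; exact ih m (by omega)
      _ ≤ √((m + 2)! : ℝ) * √(2 * π) := by
        rw [← mul_assoc]; gcongr; exact add_one_mul_sqrt_factorial_le m

lemma integral_cos_mul_gaussian (x : ℝ) :
    ∫ t : ℝ, cos (x * t) * gaussian t = √(2 * π) * gaussian x := by
  have hb : (-1 / 2 : ℂ).re < 0 := by norm_num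
  have h := congrArg Complex.re (integral_cexp_quadratic hb (Complex.I * x) 0)
  have hre := integral_re (integrable_cexp_quadratic' hb (Complex.I * x) 0)
  simp only [RCLike.re_to_complex] at hre
  have hsqrt : (π / -(-1 / 2 : ℂ)) ^ (1 / 2 : ℂ) = ((√(2 * π) : ℝ) : ℂ) := by
    rw [sqrt_eq_rpow, Complex.ofReal_cpow (by positivity)]
    push_cast
    ring_nf
  have hexp : (0 - (Complex.I * x) ^ 2 / (4 * (-1 / 2)) : ℂ) = ((-(x ^ 2 / 2) : ℝ) : ℂ) := by
    push_cast
    ring_nf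
    rw [Complex.I_sq]
    ring
  rw [← hre, hsqrt, hexp, ← Complex.ofReal_exp, ← Complex.ofReal_mul, Complex.ofReal_re] at h
  rw [gaussian, ← h]
  congr 1 with t
  have harg : (-1 / 2 * t ^ 2 + Complex.I * x * t + 0 : ℂ) =
      ((-(t ^ 2 / 2) : ℝ) : ℂ) + ((x * t : ℝ) : ℂ) * Complex.I := by
    push_cast
    ring
  rw [harg, Complex.exp_add, ← Complex.ofReal_exp, Complex.re_ofReal_mul,
    Complex.exp_ofReal_mul_I_re, gaussian, mul_comm]

/-- The `n`-th `x`-derivative of `cos (x t) e^{-t²/2}`. -/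
noncomputable def derivIntegrand (n : ℕ) (x t : ℝ) : ℝ :=
  t ^ n * cos (x * t + n * (π / 2)) * exp (-(t ^ 2 / 2))

lemma abs_derivIntegrand_le (n : ℕ) (x t : ℝ) :
    |derivIntegrand n x t| ≤ |t| ^ n * exp (-(t ^ 2 / 2)) := by
  rw [derivIntegrand, abs_mul, abs_mul, abs_pow, abs_of_pos (exp_pos _)]
  gcongr
  exact mul_le_of_le_one_right (by positivity) (abs_cos_le_one _)

lemma integrable_derivIntegrand (n : ℕ) (x : ℝ) : Integrable (derivIntegrand n x) :=
  (integrable_abs_pow_mul_exp_neg_sq_half n).mono'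
    (by unfold derivIntegrand; fun_prop : Continuous (derivIntegrand n x)).aestronglyMeasurable
    (.of_forall (abs_derivIntegrand_le n x))

lemma hasDerivAt_derivIntegrand (n : ℕ) (x t : ℝ) :
    HasDerivAt (fun x => derivIntegrand n x t) (derivIntegrand (n + 1) x t) x := by
  have hcos := (((hasDerivAt_id x).mul_const t).add_const (n * (π / 2))).cos
  refine ((hcos.const_mul (t ^ n)).mul_const (exp (-(t ^ 2 / 2)))).congr_deriv ?_
  simp only [derivIntegrand, id, Nat.cast_succ, add_mul, one_mul, ← add_assoc, cos_add_pi_div_two]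
  ring

lemma hasDerivAt_integral_derivIntegrand (n : ℕ) (x : ℝ) :
    HasDerivAt (fun x => ∫ t, derivIntegrand n x t) (∫ t, derivIntegrand (n + 1) x t) x :=
  (hasDerivAt_integral_of_dominated_loc_of_deriv_le (Metric.ball_mem_nhds x one_pos)
    (.of_forall fun x => (integrable_derivIntegrand n x).aestronglyMeasurable)
    (integrable_derivIntegrand n x) (integrable_derivIntegrand (n + 1) x).aestronglyMeasurable
    (.of_forall fun t x _ => abs_derivIntegrand_le (n + 1) x t)
    (integrable_abs_pow_mul_exp_neg_sq_half (n + 1))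
    (.of_forall fun t x _ => hasDerivAt_derivIntegrand n x t)).2

lemma iteratedDeriv_gaussian (n : ℕ) :
    iteratedDeriv n gaussian = fun x => (√(2 * π))⁻¹ * ∫ t, derivIntegrand n x t := by
  induction n with
  | zero =>
    funext x
    have h0 : (fun t => derivIntegrand 0 x t) = fun t => cos (x * t) * gaussian t := by
      funext t
      simp [derivIntegrand, gaussian]
    rw [iteratedDeriv_zero, h0, integral_cos_mul_gaussian,
      inv_mul_cancel_left₀ (by positivity)]
  | succ n ih =>
    funext x
    rw [iteratedDeriv_succ, ih]
    exact ((hasDerivAt_integral_derivIntegrand n x).const_mul _).deriv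

lemma abs_iteratedDeriv_gaussian_le (n : ℕ) (x : ℝ) :
    |iteratedDeriv n gaussian x| ≤ √(n ! : ℝ) := by
  have hpos : 0 < √(2 * π) := by positivity
  rw [iteratedDeriv_gaussian, abs_mul, abs_inv, abs_of_pos hpos, inv_mul_le_iff₀ hpos]
  calc |∫ t, derivIntegrand n x t| ≤ absMoment n := by
        rw [absMoment, ← Real.norm_eq_abs]
        exact norm_integral_le_of_norm_le (integrable_abs_pow_mul_exp_neg_sq_half n)
          (.of_forall (abs_derivIntegrand_le n x))
    _ ≤ √(n ! : ℝ) * √(2 * π) := absMoment_le n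
    _ = √(2 * π) * √(n ! : ℝ) := mul_comm _ _

lemma contDiff_gaussian : ContDiff ℝ ∞ gaussian := by
  unfold gaussian; fun_prop

lemma iteratedDeriv_comp_sub_div {f : ℝ → ℝ} {n : ℕ} (hf : ContDiff ℝ n f) (c σ t : ℝ) :
    iteratedDeriv n (fun t => f ((t - c) / σ)) t = σ⁻¹ ^ n * iteratedDeriv n f ((t - c) / σ) := by
  simp only [div_eq_inv_mul]
  rw [iteratedDeriv_comp_sub_const n (fun z => f (σ⁻¹ * z)) c, iteratedDeriv_comp_const_mul hf]

lemma abs_iteratedDeriv_gaussian_sub_div_le {σ : ℝ} (hσ : 0 < σ) (n : ℕ) (c t : ℝ) :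
    |iteratedDeriv n (fun t => gaussian ((t - c) / σ)) t| ≤ √(n ! : ℝ) / σ ^ n := by
  rw [iteratedDeriv_comp_sub_div (contDiff_infty.1 contDiff_gaussian n), abs_mul, abs_pow,
    abs_inv, abs_of_pos hσ, inv_pow, inv_mul_eq_div]
  gcongr
  exact abs_iteratedDeriv_gaussian_le n _

lemma prod_sqrt_factorial_le {ι : Type*} (s : Finset ι) (k : ι → ℕ) :
    ∏ i ∈ s, √((k i)! : ℝ) ≤ √((∑ i ∈ s, k i)! : ℝ) := by
  rw [← sqrt_prod _ fun i _ => by positivity, ← Nat.cast_prod]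
  gcongr
  exact Nat.le_of_dvd (Nat.factorial_pos _) (Nat.prod_factorial_dvd_factorial_sum s k)

variable {d : ℕ}

noncomputable def prodCoord (h : Fin d → ℝ → ℝ) : (Fin d → ℝ) → ℝ := fun x => ∏ j, h j (x j)

lemma pderiv'_prodCoord {h : Fin d → ℝ → ℝ} (hh : ∀ j, Differentiable ℝ (h j)) (i : Fin d) :
    pderiv' i (prodCoord h) = prodCoord (Function.update h i (deriv (h i))) := by
  funext x
  have hcoord (j : Fin d) : HasFDerivAt (fun x : Fin d → ℝ => h j (x j))
      (deriv (h j) (x j) • (ContinuousLinearMap.proj j : (Fin d → ℝ) →L[ℝ] ℝ)) x :=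
    (hh j (x j)).hasDerivAt.comp_hasFDerivAt x (hasFDerivAt_apply j x)
  unfold pderiv' prodCoord
  rw [(HasFDerivAt.finsetProd fun j _ => hcoord j).fderiv]
  simp only [FunLike.coe_sum, Finset.sum_apply, FunLike.coe_smul,
    Pi.smul_apply, ContinuousLinearMap.proj_apply, Pi.single_apply, smul_eq_mul, mul_ite,
    mul_one, mul_zero, Finset.sum_ite_eq', Finset.mem_univ, if_true]
  rw [← Finset.prod_erase_mul _ _ (Finset.mem_univ i), Function.update_self]
  exact congrArg (· * _) (Finset.prod_congr rfl fun j hj => by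
    rw [Function.update_of_ne (Finset.ne_of_mem_erase hj)])

lemma iterate_pderiv'_prodCoord {h : Fin d → ℝ → ℝ} (hh : ∀ j, ContDiff ℝ ∞ (h j)) (i : Fin d)
    (m : ℕ) :
    (pderiv' i)^[m] (prodCoord h) = prodCoord (Function.update h i (iteratedDeriv m (h i))) := by
  induction m with
  | zero => simp
  | succ m ih =>
    have hdiff : ∀ j, Differentiable ℝ (Function.update h i (iteratedDeriv m (h i)) j) :=
      (Function.forall_update_iff h fun _ g => Differentiable ℝ g).2
        ⟨(hh i).differentiable_iteratedDeriv m (WithTop.coe_lt_coe.2 (ENat.natCast_lt_top m)),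
          fun j _ => (hh j).differentiable (by simp)⟩
    rw [Function.iterate_succ_apply', ih, pderiv'_prodCoord hdiff, Function.update_idem,
      Function.update_self, ← iteratedDeriv_succ]

lemma foldr_iterate_pderiv'_prodCoord (k : Fin d → ℕ) {h : Fin d → ℝ → ℝ}
    (hh : ∀ j, ContDiff ℝ ∞ (h j)) {l : List (Fin d)} (hl : l.Nodup) :
    l.foldr (fun i g => (pderiv' i)^[k i] g) (prodCoord h) =
      prodCoord (l.toFinset.piecewise (fun j => iteratedDeriv (k j) (h j)) h) := by
  induction l with
  | nil => rw [List.toFinset_nil, Finset.piecewise_empty, List.foldr_nil]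
  | cons i l ih =>
    obtain ⟨hi, hl⟩ := List.nodup_cons.mp hl
    have hsmooth (j : Fin d) :
        ContDiff ℝ ∞ (l.toFinset.piecewise (fun j => iteratedDeriv (k j) (h j)) h j) := by
      by_cases hj : j ∈ l.toFinset
      · rw [Finset.piecewise_eq_of_mem _ _ _ hj, iteratedDeriv_eq_iterate]
        exact (hh j).iterate_deriv _
      · rw [Finset.piecewise_eq_of_notMem _ _ _ hj]
        exact hh j
    rw [List.foldr_cons, ih hl, iterate_pderiv'_prodCoord hsmooth, List.toFinset_cons,
      Finset.piecewise_insert, Finset.piecewise_eq_of_notMem _ _ _ (by simpa using hi)]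

lemma mixedPartial_prodCoord (k : Fin d → ℕ) {h : Fin d → ℝ → ℝ} (hh : ∀ j, ContDiff ℝ ∞ (h j)) :
    mixedPartial k (prodCoord h) = prodCoord fun j => iteratedDeriv (k j) (h j) := by
  rw [mixedPartial, foldr_iterate_pderiv'_prodCoord k hh (List.nodup_finRange d),
    List.toFinset_finRange, Finset.piecewise_univ]

lemma exp_neg_sum_sq_div_eq_prodCoord (σ : ℝ) (y : Fin d → ℝ) :
    (fun x => exp (-(∑ i, (x i - y i) ^ 2) / (2 * σ ^ 2))) =
      prodCoord fun i t => gaussian ((t - y i) / σ) := by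
  funext x
  simp only [prodCoord, gaussian]
  rw [← exp_sum]
  congr 1
  simp only [div_pow, div_div, ← Finset.sum_neg_distrib, neg_div, Finset.sum_div,
    mul_comm (2 : ℝ)]

end GaussianKernel

open GaussianKernel in
theorem gaussian_kernel_derivative_bound_general
    (d : ℕ) (σ : ℝ) (hσ : 0 < σ) (y : Fin d → ℝ)
    (f : (Fin d → ℝ) → ℝ)
    (hf : f = fun x => Real.exp (-(∑ i, (x i - y i) ^ 2) / (2 * σ ^ 2)))
    (K : ℕ) (k : Fin d → ℕ) (hk : (∑ i, k i) = K)
    (x : Fin d → ℝ) :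
    |mixedPartial k f x| ≤ Real.sqrt (Nat.factorial K) / σ ^ K := by
  have hsmooth (i : Fin d) : ContDiff ℝ ∞ fun t => gaussian ((t - y i) / σ) :=
    contDiff_gaussian.comp (by fun_prop)
  subst hf hk
  rw [exp_neg_sum_sq_div_eq_prodCoord, mixedPartial_prodCoord k hsmooth, prodCoord,
    Finset.abs_prod]
  calc ∏ i, |iteratedDeriv (k i) (fun t => gaussian ((t - y i) / σ)) (x i)|
      ≤ ∏ i, √((k i)! : ℝ) / σ ^ k i :=
        Finset.prod_le_prod (fun i _ => abs_nonneg _)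
          fun i _ => abs_iteratedDeriv_gaussian_sub_div_le hσ (k i) (y i) (x i)
    _ ≤ √((∑ i, k i)! : ℝ) / σ ^ (∑ i, k i) := by
        rw [Finset.prod_div_distrib, Finset.prod_pow_eq_pow_sum]
        gcongr
        exact prod_sqrt_factorial_le _ k

/-- every order-`K` mixed partial derivative of the Gaussian kernel
`x ↦ exp(−‖x − y‖²/(2σ²))` is bounded by `(K!)^{1/2} / σ^K`. -/
theorem gaussian_kernel_derivative_bound
    (d : ℕ) (hd : 1 ≤ d) (σ : ℝ) (hσ : 0 < σ) (y : Fin d → ℝ)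
    (f : (Fin d → ℝ) → ℝ)
    (hf : f = fun x => Real.exp (-(∑ i, (x i - y i) ^ 2) / (2 * σ ^ 2)))
    (K : ℕ) (hK : 1 ≤ K) (k : Fin d → ℕ) (hk : (∑ i, k i) = K)
    (x : Fin d → ℝ) :
    |mixedPartial k f x| ≤ Real.sqrt (Nat.factorial K) / σ ^ K :=
  gaussian_kernel_derivative_bound_general d σ hσ y f hf K k hk x
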